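/- Lemma A.1 (strict monotonicity of F in k): Fix α ∈ (0,1) and x ∈ ℝ, and define for real y > α the quantity F(α, x, y) = 1 − y[Φ(x + z_y) − Φ(x − z_y)] where z_y = Φ⁻¹(1 − α/(2y)). Then y ↦ F(α, x, y) is strictly decreasing on (α, ∞); in particular, for integers 1 ≤ k₁ < k₂, F(α, x, k₂) < F(α, x, k₁). -/

import Mathlib

open scoped Classical

noncomputable section

/-- The standard normal CDF. -/
def Phi (x : ℝ) : ℝ := ∫ t in Set.Iic x, Real.exp (-(t ^ 2) / 2) / Real.sqrt (2 * Real.pi)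

/-- The standard normal quantile function (inverse of `Phi` on (0,1)). -/
def PhiInv (q : ℝ) : ℝ := sInf {x : ℝ | q ≤ Phi x}

/-- The power function `F(α,x,y) = 1 − y[Φ(x+z_y) − Φ(x−z_y)]`, `z_y = Φ⁻¹(1 − α/(2y))`. -/
def Fpow (α x y : ℝ) : ℝ :=
  1 - y * (Phi (x + PhiInv (1 - α / (2 * y))) - Phi (x - PhiInv (1 - α / (2 * y))))

/-!
Put `R(z) = (Φ(x+z) − Φ(x−z)) / (1 − Φ(z))`. Since `1 − Φ(z_y) = α/(2y)`, we have
`F(α,x,y) = 1 − (α/2) R(z_y)`, and `y ↦ z_y` is increasing with values in `(0,∞)`, so it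
suffices that `R` is strictly increasing there. The numerator of `R'` is
`(φ(x+z) + φ(x−z))(1 − Φ(z)) + (Φ(x+z) − Φ(x−z)) φ(z)`, and both terms are positive for `z > 0`.
-/

open MeasureTheory Set Filter Topology ProbabilityTheory

local notation "φ" => gaussianPDFReal 0 1

lemma continuous_gaussianPDFReal (μ : ℝ) (v : NNReal) : Continuous (gaussianPDFReal μ v) := by
  rw [gaussianPDFReal_def]
  fun_prop

lemma Phi_eq_integral (x : ℝ) : Phi x = ∫ t in Iic x, φ t := by
  unfold Phi
  congr 1 with t
  simp [gaussianPDFReal, div_eq_inv_mul]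

lemma Phi_sub_Phi (a b : ℝ) : Phi b - Phi a = ∫ t in a..b, φ t := by
  simp only [Phi_eq_integral]
  exact intervalIntegral.integral_Iic_sub_Iic (integrable_gaussianPDFReal 0 1).integrableOn
    (integrable_gaussianPDFReal 0 1).integrableOn

lemma Phi_strictMono : StrictMono Phi := fun a b hab => by
  have := intervalIntegral.intervalIntegral_pos_of_pos
    (integrable_gaussianPDFReal 0 1).intervalIntegrable (gaussianPDFReal_pos 0 1 · one_ne_zero) hab
  linarith [Phi_sub_Phi a b]

lemma hasDerivAt_Phi (x : ℝ) : HasDerivAt Phi (φ x) x := by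
  have hφ := continuous_gaussianPDFReal 0 1
  have h := (intervalIntegral.integral_hasDerivAt_right (a := 0) (b := x)
    (integrable_gaussianPDFReal 0 1).intervalIntegrable
    hφ.aestronglyMeasurable.stronglyMeasurableAtFilter hφ.continuousAt).const_add (Phi 0)
  exact h.congr_of_eventuallyEq (.of_forall fun u => by linarith [Phi_sub_Phi 0 u])

lemma continuous_Phi : Continuous Phi :=
  continuous_iff_continuousAt.2 fun x => (hasDerivAt_Phi x).continuousAt

lemma Phi_add_integral_Ioi (x : ℝ) : Phi x + ∫ t in Ioi x, φ t = 1 := by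
  rw [Phi_eq_integral, intervalIntegral.integral_Iic_add_Ioi
    (integrable_gaussianPDFReal 0 1).integrableOn (integrable_gaussianPDFReal 0 1).integrableOn,
    integral_gaussianPDFReal_eq_one 0 one_ne_zero]

lemma Phi_neg (x : ℝ) : Phi (-x) = 1 - Phi x := by
  have h : Phi (-x) = ∫ t in Ioi x, φ t := by
    rw [Phi_eq_integral, ← neg_neg x, ← integral_comp_neg_Iic, neg_neg]
    simp [gaussianPDFReal]
  linarith [Phi_add_integral_Ioi x]

lemma Phi_zero : Phi 0 = 1 / 2 := by
  have h := Phi_neg 0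
  rw [neg_zero] at h
  linarith

lemma tendsto_Phi_atTop : Tendsto Phi atTop (𝓝 1) := by
  simpa only [id, ← Phi_eq_integral, integral_gaussianPDFReal_eq_one 0 one_ne_zero] using
    (aecover_Iic tendsto_id).integral_tendsto_of_countably_generated
      (integrable_gaussianPDFReal 0 1)

lemma tendsto_Phi_atBot : Tendsto Phi atBot (𝓝 0) := by
  have h := (tendsto_Phi_atTop.comp tendsto_neg_atBot_atTop).const_sub 1
  simpa [Function.comp_def, Phi_neg] using h

lemma Phi_lt_one (x : ℝ) : Phi x < 1 :=
  (Phi_strictMono (lt_add_one x)).trans_le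
    (Phi_strictMono.monotone.ge_of_tendsto tendsto_Phi_atTop _)

lemma Phi_PhiInv {q : ℝ} (hq : q ∈ Ioo (0 : ℝ) 1) : Phi (PhiInv q) = q := by
  obtain ⟨z, rfl⟩ : q ∈ range Phi := mem_range_of_exists_le_of_exists_ge continuous_Phi
    ((tendsto_Phi_atBot.eventually (eventually_lt_nhds hq.1)).exists.imp fun _ => le_of_lt)
    ((tendsto_Phi_atTop.eventually (eventually_gt_nhds hq.2)).exists.imp fun _ => le_of_lt)
  have hset : {x : ℝ | Phi z ≤ Phi x} = Ici z := by
    ext u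
    exact Phi_strictMono.le_iff_le
  rw [PhiInv, hset, csInf_Ici]

lemma PhiInv_strictMonoOn : StrictMonoOn PhiInv (Ioo 0 1) := fun p hp q hq hpq =>
  Phi_strictMono.lt_iff_lt.1 (by rwa [Phi_PhiInv hp, Phi_PhiInv hq])

lemma PhiInv_pos {q : ℝ} (hq : q ∈ Ioo (1 / 2 : ℝ) 1) : 0 < PhiInv q := by
  rw [← Phi_strictMono.lt_iff_lt, Phi_zero, Phi_PhiInv ⟨by linarith [hq.1], hq.2⟩]
  exact hq.1

def centralRatio (x z : ℝ) : ℝ := (Phi (x + z) - Phi (x - z)) / (1 - Phi z)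

lemma hasDerivAt_centralRatio (x z : ℝ) :
    HasDerivAt (centralRatio x)
      (((φ (x + z) + φ (x - z)) * (1 - Phi z) + (Phi (x + z) - Phi (x - z)) * φ z) /
        (1 - Phi z) ^ 2) z := by
  have hmass : HasDerivAt (fun z => Phi (x + z) - Phi (x - z)) (φ (x + z) + φ (x - z)) z :=
    (((hasDerivAt_Phi _).comp_const_add x z).sub
      ((hasDerivAt_Phi _).comp_const_sub x z)).congr_deriv (sub_neg_eq_add _ _)
  exact (hmass.div ((hasDerivAt_Phi z).const_sub 1) (sub_pos.2 (Phi_lt_one z)).ne').congr_deriv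
    (by ring)

lemma centralRatio_strictMonoOn (x : ℝ) : StrictMonoOn (centralRatio x) (Ioi 0) := by
  refine strictMonoOn_of_deriv_pos (convex_Ioi 0)
    (fun z _ => (hasDerivAt_centralRatio x z).continuousAt.continuousWithinAt) fun z hz => ?_
  rw [interior_Ioi, mem_Ioi] at hz
  rw [(hasDerivAt_centralRatio x z).deriv]
  have hmass : 0 < Phi (x + z) - Phi (x - z) := sub_pos.2 (Phi_strictMono (by linarith))
  have htail : 0 < 1 - Phi z := sub_pos.2 (Phi_lt_one z)
  have hφ (t : ℝ) : 0 < φ t := gaussianPDFReal_pos 0 1 t one_ne_zero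
  exact div_pos (add_pos (mul_pos (add_pos (hφ _) (hφ _)) htail) (mul_pos hmass (hφ z)))
    (pow_pos htail 2)

lemma Fpow_eq_one_sub_mul_centralRatio {α x y : ℝ} (hα : 0 < α) (hy : α < 2 * y) :
    Fpow α x y = 1 - α / 2 * centralRatio x (PhiInv (1 - α / (2 * y))) := by
  have hy₀ : 0 < y := by linarith
  have hlevel : 0 < α / (2 * y) ∧ α / (2 * y) < 1 :=
    ⟨by positivity, (div_lt_one (by positivity)).2 hy⟩
  have htail : 1 - Phi (PhiInv (1 - α / (2 * y))) = α / (2 * y) := by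
    rw [Phi_PhiInv ⟨by linarith, by linarith⟩]
    ring
  rw [Fpow, centralRatio, htail]
  field_simp

lemma one_sub_div_mem_Ioo {α y : ℝ} (hα : 0 < α) (hy : α < y) :
    1 - α / (2 * y) ∈ Ioo (1 / 2 : ℝ) 1 := by
  have hy₀ : 0 < y := hα.trans hy
  have hlevel : 0 < α / (2 * y) ∧ α / (2 * y) < 1 / 2 :=
    ⟨by positivity, by rw [div_lt_div_iff₀ (by positivity) two_pos]; linarith⟩
  constructor <;> linarith

lemma Fpow_strictAntiOn {α : ℝ} (hα : 0 < α) (x : ℝ) : StrictAntiOn (Fpow α x) (Ioi α) := by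
  intro y₁ hy₁ y₂ hy₂ hlt
  rw [mem_Ioi] at hy₁ hy₂
  have hq₁ := one_sub_div_mem_Ioo hα hy₁
  have hq₂ := one_sub_div_mem_Ioo hα hy₂
  have hq : 1 - α / (2 * y₁) < 1 - α / (2 * y₂) := by gcongr; linarith
  have hz := PhiInv_strictMonoOn (Ioo_subset_Ioo_left one_half_pos.le hq₁)
    (Ioo_subset_Ioo_left one_half_pos.le hq₂) hq
  have hR := centralRatio_strictMonoOn x (PhiInv_pos hq₁) (PhiInv_pos hq₂) hz
  rw [Fpow_eq_one_sub_mul_centralRatio hα (by linarith),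
    Fpow_eq_one_sub_mul_centralRatio hα (by linarith)]
  linarith [mul_lt_mul_of_pos_left hR (half_pos hα)]

/-- Strict monotonicity of `F` in the last argument: for fixed `α ∈ (0,1)` and `x ∈ ℝ`,
`y ↦ F(α,x,y)` is strictly decreasing on `(α,∞)`; in particular, for integers
`1 ≤ k₁ < k₂`, `F(α,x,k₂) < F(α,x,k₁)`. -/
theorem F_strict_decreasing_in_k (α x : ℝ) (hα : α ∈ Set.Ioo (0 : ℝ) 1) :
    (∀ y₁ y₂ : ℝ, α < y₁ → y₁ < y₂ → Fpow α x y₂ < Fpow α x y₁) ∧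
      ∀ k₁ k₂ : ℕ, 1 ≤ k₁ → k₁ < k₂ → Fpow α x k₂ < Fpow α x k₁ := by
  obtain ⟨hα₀, hα₁⟩ := hα
  have hanti := Fpow_strictAntiOn hα₀ x
  refine ⟨fun y₁ y₂ hy₁ hlt => hanti hy₁ (hy₁.trans hlt) hlt, fun k₁ k₂ hk₁ hlt => ?_⟩
  have hα_lt : α < k₁ := hα₁.trans_le (by exact_mod_cast hk₁)
  have hlt' : (k₁ : ℝ) < k₂ := by exact_mod_cast hlt
  exact hanti hα_lt (hα_lt.trans hlt') hlt'

end
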